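/- arXiv:1601.05231 — 10 statements merged into one kernel-verified Lean document; each statement's English description precedes it below -/
import Mathlib

section
/- Let (M,J) be a manifold with J² = α·Id and ∇ an arbitrary linear connection with ∇⁰ its associated connection ∇⁰_X Y = ∇_X Y + (−α/2)(∇_X J)JY. A linear connection ∇ᵃ satisfies ∇ᵃ J = 0 if and only if ∇ᵃ = ∇⁰ + Q for some (1,2)-tensor field Q with Q(X,JY) = J Q(X,Y) for all X, Y. -/
/-- Covariant derivative of `J` with respect to a connection `D`: `(∇_X J) Y`. -/
def covD {V : Type*} [AddCommGroup V] (J : V → V) (D : V → V → V) (X Y : V) : V :=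
  D X (J Y) - J (D X Y)

/-- The connection `∇⁰` built from `D`: `∇⁰_X Y = ∇_X Y + (-α/2) (∇_X J)(JY)`. -/
noncomputable def conn0 {V : Type*} [AddCommGroup V] [Module ℝ V] (α : ℝ) (J : V → V) (D : V → V → V)
    (X Y : V) : V :=
  D X Y + (-α / 2) • covD J D X (J Y)

/-- The Kobayashi-Nomizu type connection `∇¹`. -/
noncomputable def conn1 {V : Type*} [AddCommGroup V] [Module ℝ V] (α : ℝ) (J : V → V) (D : V → V → V)
    (X Y : V) : V :=
  conn0 α J D X Y + (-α / 4) • (covD J D Y (J X) - covD J D (J Y) X)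

/-- The Yano type connection. -/
noncomputable def connY {V : Type*} [AddCommGroup V] [Module ℝ V] (α : ℝ) (J : V → V) (D : V → V → V)
    (X Y : V) : V :=
  D X Y + (-α / 2) • covD J D Y (J X) + (-α / 4) • (covD J D X (J Y) - covD J D (J X) Y)

/-- The Nijenhuis tensor of `J` with respect to the Lie bracket `lb`. -/
def nijenhuis {V : Type*} [AddCommGroup V] (J : V → V) (lb : V → V → V) (X Y : V) : V :=
  J (J (lb X Y)) + lb (J X) (J Y) - J (lb (J X) Y) - J (lb X (J Y))

/-- The torsion tensor of a connection `D`. -/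
def torsion {V : Type*} [AddCommGroup V] (lb : V → V → V) (D : V → V → V) (X Y : V) : V :=
  D X Y - D Y X - lb X Y

/-- a connection `∇ᵃ` satisfies `∇ᵃJ = 0` iff `∇ᵃ = ∇⁰ + Q` for some
(1,2)-tensor `Q` with `Q(X,JY) = J Q(X,Y)`. -/
theorem adapted_iff_conn0_plus_Q
    {V : Type*} [AddCommGroup V] [Module ℝ V]
    (α : ℝ) (hα : α = 1 ∨ α = -1)
    (J : V →ₗ[ℝ] V) (hJ : ∀ X, J (J X) = α • X)
    (D : V →ₗ[ℝ] V →ₗ[ℝ] V) (Da : V →ₗ[ℝ] V →ₗ[ℝ] V) :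
    (∀ X Y : V, Da X (J Y) = J (Da X Y)) ↔
      ∃ Q : V → V → V,
        (∀ X Y, Q X (J Y) = J (Q X Y)) ∧
        (∀ X Y, Da X Y = conn0 α (⇑J) (fun a b => D a b) X Y + Q X Y) := by
  have h2 : α * α = 1 := by rcases hα with h | h <;> simp [h]
  have key : ∀ X Y : V, conn0 α (⇑J) (fun a b => D a b) X (J Y)
      = J (conn0 α (⇑J) (fun a b => D a b) X Y) := by
    intro X Y
    simp only [conn0, covD, hJ, map_sub, map_add, map_smul, smul_sub, smul_smul]
    match_scalars <;> ring_nf <;> nlinarith [h2]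
  constructor
  · intro h
    refine ⟨fun X Y => Da X Y - conn0 α (⇑J) (fun a b => D a b) X Y, ?_, ?_⟩
    · intro X Y
      simp only [h, key, ← map_sub]
    · intro X Y
      module
  · rintro ⟨Q, hQ, hD⟩ X Y
    rw [hD, hD X Y, hQ, key, map_add]
end

section
/- Let (M,J) be a manifold with J² = α·Id and ∇ a torsion-free linear connection. Define the Kobayashi–Nomizu type connection ∇¹_X Y = ∇_X Y + (−α/2)(∇_X J)JY + (−α/4)((∇_Y J)JX − (∇_{JY} J)X). Then the torsion T¹ of ∇¹ satisfies (−α) N_J(X,Y) = 4 T¹(X,Y) for all vector fields X, Y. -/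
/-- the torsion of the Kobayashi-Nomizu type connection satisfies
`(−α) N_J(X,Y) = 4 T¹(X,Y)`. -/
theorem KN_torsion_eq_nijenhuis
    {V : Type*} [AddCommGroup V] [Module ℝ V]
    (α : ℝ) (hα : α = 1 ∨ α = -1)
    (J : V →ₗ[ℝ] V) (hJ : ∀ X, J (J X) = α • X)
    (lb : V →ₗ[ℝ] V →ₗ[ℝ] V)
    (D : V →ₗ[ℝ] V →ₗ[ℝ] V)
    (htf : ∀ X Y : V, D X Y - D Y X = lb X Y) :
    ∀ X Y : V,
      (-α) • nijenhuis (⇑J) (fun a b => lb a b) X Y =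
        (4 : ℝ) • torsion (fun a b => lb a b) (conn1 α (⇑J) (fun a b => D a b)) X Y := by
  intro X Y
  have hα2 : α * α = 1 := by rcases hα with h|h <;> simp [h]
  simp only [nijenhuis, torsion, conn1, conn0, covD, hJ, ← htf, map_sub, map_add, map_smul]
  module
end

section
/- Let (M,J) be a manifold with J² = α·Id, ∇ a torsion-free connection, ∇¹ the Kobayashi–Nomizu type connection and ∇̃¹ the Yano type connection defined by ∇̃¹_X Y = ∇_X Y + (−α/2)(∇_Y J)JX + (−α/4)((∇_X J)JY − (∇_{JX} J)Y). Then ∇¹_X Y − ∇̃¹_X Y = (−α/4) N_J(X,Y), and the torsion T̃¹ of ∇̃¹ satisfies T̃¹(X,Y) = (α/4) N_J(X,Y). -/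
/-- comparison of the Kobayashi-Nomizu and Yano type connections:
`∇¹ − ∇̃¹ = (−α/4) N_J` and the Yano torsion is `T̃¹ = (α/4) N_J`. -/
theorem KN_vs_Yano
    {V : Type*} [AddCommGroup V] [Module ℝ V]
    (α : ℝ) (hα : α = 1 ∨ α = -1)
    (J : V →ₗ[ℝ] V) (hJ : ∀ X, J (J X) = α • X)
    (lb : V →ₗ[ℝ] V →ₗ[ℝ] V)
    (D : V →ₗ[ℝ] V →ₗ[ℝ] V)
    (htf : ∀ X Y : V, D X Y - D Y X = lb X Y) :
    (∀ X Y : V,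
      conn1 α (⇑J) (fun a b => D a b) X Y - connY α (⇑J) (fun a b => D a b) X Y =
        (-α / 4) • nijenhuis (⇑J) (fun a b => lb a b) X Y) ∧
    (∀ X Y : V,
      torsion (fun a b => lb a b) (connY α (⇑J) (fun a b => D a b)) X Y =
        (α / 4) • nijenhuis (⇑J) (fun a b => lb a b) X Y) := by
  have hlb : ∀ X Y : V, lb X Y = D X Y - D Y X := fun X Y => (htf X Y).symm
  constructor <;> intro X Y <;>
    simp only [conn1, conn0, connY, covD, nijenhuis, torsion, hlb, map_sub, hJ, map_smul,
      smul_sub, smul_add] <;>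
    rcases hα with h | h <;> subst h <;> module
end

section
/- Let (M,J) be a manifold with J² = α·Id and ∇ a torsion-free connection. The following are equivalent: (i) N_J = 0; (ii) the Yano type connection ∇̃¹ satisfies ∇̃¹J = 0; (iii) ∇̃¹ = ∇¹ (the Kobayashi–Nomizu type connection). -/
lemma aux_idA {V : Type*} [AddCommGroup V] [Module ℝ V] (α : ℝ) (hα : α = 1 ∨ α = -1)
    (J : V →ₗ[ℝ] V) (hJ : ∀ X, J (J X) = α • X) (D : V →ₗ[ℝ] V →ₗ[ℝ] V) (X Y : V) :
    connY α (⇑J) (fun a b => D a b) X (J Y) - J (connY α (⇑J) (fun a b => D a b) X Y)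
      = (α/2) • nijenhuis (⇑J) (fun a b => D a b - D b a) (J X) Y := by
  rcases hα with rfl | rfl <;>
  · simp only [connY, covD, nijenhuis, map_add, map_sub, map_smul, hJ, smul_sub, smul_add,
      LinearMap.add_apply, LinearMap.sub_apply, LinearMap.smul_apply, map_neg, map_one]
    module

lemma aux_idB {V : Type*} [AddCommGroup V] [Module ℝ V] (α : ℝ) (hα : α = 1 ∨ α = -1)
    (J : V →ₗ[ℝ] V) (hJ : ∀ X, J (J X) = α • X) (D : V →ₗ[ℝ] V →ₗ[ℝ] V) (X Y : V) :
    connY α (⇑J) (fun a b => D a b) X Y - conn1 α (⇑J) (fun a b => D a b) X Y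
      = (α/4) • nijenhuis (⇑J) (fun a b => D a b - D b a) X Y := by
  rcases hα with rfl | rfl <;>
  · simp only [connY, conn1, conn0, covD, nijenhuis, map_add, map_sub, map_smul, hJ, smul_sub,
      smul_add, LinearMap.add_apply, LinearMap.sub_apply, LinearMap.smul_apply, map_neg, map_one]
    module

/-- equivalence of (i) integrability of `J`, (ii) the Yano type connection is
adapted to `J`, (iii) the Yano and Kobayashi-Nomizu type connections coincide. -/
theorem Yano_adapted_iff_integrable
    {V : Type*} [AddCommGroup V] [Module ℝ V]
    (α : ℝ) (hα : α = 1 ∨ α = -1)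
    (J : V →ₗ[ℝ] V) (hJ : ∀ X, J (J X) = α • X)
    (lb : V →ₗ[ℝ] V →ₗ[ℝ] V)
    (D : V →ₗ[ℝ] V →ₗ[ℝ] V)
    (htf : ∀ X Y : V, D X Y - D Y X = lb X Y) :
    ((∀ X Y : V, nijenhuis (⇑J) (fun a b => lb a b) X Y = 0) ↔
      (∀ X Y : V, connY α (⇑J) (fun a b => D a b) X (J Y) =
        J (connY α (⇑J) (fun a b => D a b) X Y))) ∧
    ((∀ X Y : V, nijenhuis (⇑J) (fun a b => lb a b) X Y = 0) ↔
      (∀ X Y : V, connY α (⇑J) (fun a b => D a b) X Y =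
        conn1 α (⇑J) (fun a b => D a b) X Y)) := by
  have hα0 : α ≠ 0 := by rcases hα with rfl | rfl <;> norm_num
  -- nijenhuis with lb equals nijenhuis with the D-bracket
  have hNB : ∀ X Y : V, nijenhuis (⇑J) (fun a b => lb a b) X Y
      = nijenhuis (⇑J) (fun a b => D a b - D b a) X Y := by
    intro X Y
    simp only [nijenhuis, ← htf]
  -- linearity of nijenhuis in the first argument under α-scaling
  have hscale : ∀ X Y : V, nijenhuis (⇑J) (fun a b => D a b - D b a) (α • X) Y
      = α • nijenhuis (⇑J) (fun a b => D a b - D b a) X Y := by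
    intro X Y
    simp only [nijenhuis, map_smul, LinearMap.smul_apply, LinearMap.sub_apply, map_sub,
      smul_sub, smul_add]
  constructor
  · constructor
    · intro hN X Y
      have := aux_idA α hα J hJ D X Y
      rw [← hNB, hN] at this
      rw [← sub_eq_zero, this, smul_zero]
    · intro h X Y
      have key : ∀ X Y : V, nijenhuis (⇑J) (fun a b => D a b - D b a) (J X) Y = 0 := by
        intro X Y
        have := aux_idA α hα J hJ D X Y
        rw [h X Y, sub_self] at this
        have h2 := this.symm
        rcases smul_eq_zero.mp h2 with h3 | h3
        · exfalso; rcases hα with rfl | rfl <;> norm_num at h3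
        · exact h3
      have := key (J X) Y
      rw [hJ X, hscale] at this
      rw [hNB]
      exact (smul_eq_zero.mp this).resolve_left hα0
  · constructor
    · intro hN X Y
      have := aux_idB α hα J hJ D X Y
      rw [← hNB, hN] at this
      rw [← sub_eq_zero, this, smul_zero]
    · intro h X Y
      have := aux_idB α hα J hJ D X Y
      rw [h X Y, sub_self] at this
      have h2 := this.symm
      rw [hNB]
      rcases smul_eq_zero.mp h2 with h3 | h3
      · exact absurd h3 (by rcases hα with rfl | rfl <;> norm_num)
      · exact h3
end

section
/- Let (M,J,g) be a (J²=±1)-metric manifold. The first canonical connection ∇⁰ is the unique connection with ∇ᵃJ = 0, ∇ᵃg = 0 whose potential tensor S = ∇ᵃ − ∇ᵍ satisfies S(X,Y) + α J S(X,JY) = 0 for all vector fields X, Y. -/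
/-- among connections `∇ᵃ` adapted to `(J,g)`, the first canonical connection
is the unique one whose potential tensor `S = ∇ᵃ − ∇ᵍ` satisfies
`S(X,Y) + α J S(X,JY) = 0`. -/
theorem conn0_unique_potential_condition
    {V : Type*} [AddCommGroup V] [Module ℝ V]
    {C : Type*} [CommRing C] [Algebra ℝ C]
    (α ε : ℝ) (hα : α = 1 ∨ α = -1) (hε : ε = 1 ∨ ε = -1)
    (J : V →ₗ[ℝ] V) (hJ : ∀ X, J (J X) = α • X)
    (g : V →ₗ[ℝ] V →ₗ[ℝ] C)
    (hgsymm : ∀ X Y, g X Y = g Y X)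
    (hgnondeg : ∀ X : V, (∀ Y, g X Y = 0) → X = 0)
    (hherm : ∀ X Y, g (J X) (J Y) = ε • g X Y)
    (lb : V →ₗ[ℝ] V →ₗ[ℝ] V)
    (act : V → C → C)
    (Dg : V →ₗ[ℝ] V →ₗ[ℝ] V)
    (htf : ∀ X Y : V, Dg X Y - Dg Y X = lb X Y)
    (hcompat : ∀ X Y Z : V, act X (g Y Z) = g (Dg X Y) Z + g Y (Dg X Z))
    (Da : V →ₗ[ℝ] V →ₗ[ℝ] V)
    (haJ : ∀ X Y : V, Da X (J Y) = J (Da X Y))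
    (hag : ∀ X Y Z : V, act X (g Y Z) = g (Da X Y) Z + g Y (Da X Z)) :
    (∀ X Y : V, (Da X Y - Dg X Y) + α • J (Da X (J Y) - Dg X (J Y)) = 0) ↔
      (∀ X Y : V, Da X Y = conn0 α (⇑J) (fun a b => Dg a b) X Y) := by
  rcases hα with h | h <;> subst h <;> constructor
  · intro h X Y
    have e := h X Y
    rw [haJ] at e
    simp only [map_sub, hJ, conn0, covD, map_smul, one_smul, map_add] at e ⊢
    linear_combination (norm := module) (1/2 : ℝ) • e
  · intro h X Y
    rw [h X Y, h X (J Y)]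
    simp only [conn0, covD, hJ, map_add, map_sub, map_smul, one_smul]
    module
  · intro h X Y
    have e := h X Y
    rw [haJ] at e
    simp only [map_sub, hJ, conn0, covD, map_smul, one_smul, map_add, neg_smul, map_neg] at e ⊢
    linear_combination (norm := module) (1/2 : ℝ) • e
  · intro h X Y
    rw [h X Y, h X (J Y)]
    simp only [conn0, covD, hJ, map_add, map_sub, map_smul, one_smul, neg_smul, map_neg]
    module
end

section
/- Let (M,J,g) be a (J²=±1)-metric manifold and ∇ᵃ an adapted connection with torsion Tᵃ. If Tᵃ(JX,JY) = (−α) Tᵃ(X,Y) for all X, Y, then N_J = 0. Likewise, if J Tᵃ(JX,Y) = α Tᵃ(X,Y) for all X, Y, then N_J = 0. -/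
/-- sufficient conditions for integrability in terms of the torsion of an
adapted connection: `Tᵃ(JX,JY) = −α Tᵃ(X,Y)` implies `N_J = 0`, and
`J Tᵃ(JX,Y) = α Tᵃ(X,Y)` implies `N_J = 0`. -/
theorem torsion_conditions_imply_integrable
    {V : Type*} [AddCommGroup V] [Module ℝ V]
    {C : Type*} [CommRing C] [Algebra ℝ C]
    (α ε : ℝ) (hα : α = 1 ∨ α = -1) (hε : ε = 1 ∨ ε = -1)
    (J : V →ₗ[ℝ] V) (hJ : ∀ X, J (J X) = α • X)
    (g : V →ₗ[ℝ] V →ₗ[ℝ] C)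
    (hgsymm : ∀ X Y, g X Y = g Y X)
    (hgnondeg : ∀ X : V, (∀ Y, g X Y = 0) → X = 0)
    (hherm : ∀ X Y, g (J X) (J Y) = ε • g X Y)
    (lb : V →ₗ[ℝ] V →ₗ[ℝ] V)
    (act : V → C → C)
    (Dg : V →ₗ[ℝ] V →ₗ[ℝ] V)
    (htf : ∀ X Y : V, Dg X Y - Dg Y X = lb X Y)
    (hcompat : ∀ X Y Z : V, act X (g Y Z) = g (Dg X Y) Z + g Y (Dg X Z))
    (Da : V →ₗ[ℝ] V →ₗ[ℝ] V)
    (haJ : ∀ X Y : V, Da X (J Y) = J (Da X Y))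
    (hag : ∀ X Y Z : V, act X (g Y Z) = g (Da X Y) Z + g Y (Da X Z)) :
    ((∀ X Y : V,
        torsion (fun a b => lb a b) (fun a b => Da a b) (J X) (J Y) =
          (-α) • torsion (fun a b => lb a b) (fun a b => Da a b) X Y) →
      ∀ X Y : V, nijenhuis (⇑J) (fun a b => lb a b) X Y = 0) ∧
    ((∀ X Y : V,
        J (torsion (fun a b => lb a b) (fun a b => Da a b) (J X) Y) =
          α • torsion (fun a b => lb a b) (fun a b => Da a b) X Y) →
      ∀ X Y : V, nijenhuis (⇑J) (fun a b => lb a b) X Y = 0) := by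
  set T : V → V → V := fun a b => torsion (fun a b => lb a b) (fun a b => Da a b) a b with hT
  have hαne : α ≠ 0 := by rcases hα with h | h <;> rw [h] <;> norm_num
  have hlb : ∀ X Y : V, lb Y X = - lb X Y := by
    intro X Y
    rw [← htf Y X, ← htf X Y]; abel
  have hTsm : ∀ (c : ℝ) (X Y : V), T (c • X) Y = c • T X Y := by
    intro c X Y
    simp [hT, torsion, map_smul, smul_sub]
  have hTanti : ∀ X Y : V, T Y X = - T X Y := by
    intro X Y
    simp only [hT, torsion]
    rw [hlb X Y]; abel
  have key : ∀ X Y : V, nijenhuis (⇑J) (fun a b => lb a b) X Y =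
      J (T (J X) Y) + J (T X (J Y)) - T (J X) (J Y) - α • T X Y := by
    intro X Y
    simp only [hT, nijenhuis, torsion, map_sub, hJ, haJ, map_smul, smul_sub]
    abel
  constructor
  · intro h
    replace h : ∀ X Y : V, T (J X) (J Y) = (-α) • T X Y := h
    intro X Y
    have h1 : T X (J Y) = - T (J X) Y := by
      have h0 := h (J X) Y
      rw [hJ, hTsm] at h0
      have h2 : α • T X (J Y) = α • (- T (J X) Y) := by
        rw [h0]; simp [neg_smul]
      exact smul_right_injective V hαne h2
    rw [key, h1, h X Y]
    simp only [map_neg, neg_smul]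
    abel
  · intro h
    replace h : ∀ X Y : V, J (T (J X) Y) = α • T X Y := h
    intro X Y
    have habs : ∀ X Y : V, T X (J Y) = J (T X Y) := by
      intro X Y
      have h1 : J (T X (J Y)) = α • T X Y := by
        rw [hTanti (J Y) X, map_neg, h Y X, hTanti X Y]
        simp
      have h2 := congrArg (fun v => J v) h1
      simp only [hJ, map_smul] at h2
      exact smul_right_injective V hαne h2
    have h3 : T (J X) (J Y) = α • T X Y := by
      have h4 := h X (J Y)
      rw [habs X Y] at h4
      have h5 := congrArg (fun v => J v) h4
      simp only [hJ, map_smul] at h5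
      exact smul_right_injective V hαne h5
    rw [key, h X Y, habs X Y, hJ, h3]
    abel
end

section
/- Let (M,J,g) be a (J²=±1)-metric manifold with αε = 1. The following are equivalent: (i) ∇ᵍΦ = 0 (Kähler type), where Φ(X,Y) = g(JX,Y); (ii) g((∇ᵍ_X J)Y, Z) = g((∇ᵍ_Y J)Z, X) + g((∇ᵍ_Z J)X, Y) for all X, Y, Z; (iii) g((∇ᵍ_X J)Y, Y) = 0 for all X, Y. -/
/-- for `αε = 1`, the Kähler condition `∇ᵍΦ = 0` is equivalent to each of the
two stated conditions on `g((∇ᵍ J)·,·)`. -/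
theorem kaehler_characterizations_ae_pos
    {V : Type*} [AddCommGroup V] [Module ℝ V]
    {C : Type*} [CommRing C] [Algebra ℝ C]
    (α ε : ℝ) (hα : α = 1 ∨ α = -1) (hε : ε = 1 ∨ ε = -1)
    (J : V →ₗ[ℝ] V) (hJ : ∀ X, J (J X) = α • X)
    (g : V →ₗ[ℝ] V →ₗ[ℝ] C)
    (hgsymm : ∀ X Y, g X Y = g Y X)
    (hgnondeg : ∀ X : V, (∀ Y, g X Y = 0) → X = 0)
    (hherm : ∀ X Y, g (J X) (J Y) = ε • g X Y)
    (lb : V →ₗ[ℝ] V →ₗ[ℝ] V)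
    (act : V → C → C)
    (Dg : V →ₗ[ℝ] V →ₗ[ℝ] V)
    (htf : ∀ X Y : V, Dg X Y - Dg Y X = lb X Y)
    (hcompat : ∀ X Y Z : V, act X (g Y Z) = g (Dg X Y) Z + g Y (Dg X Z))
    (hae : α * ε = 1) :
    ((∀ X Y Z : V, g (covD (⇑J) (fun a b => Dg a b) X Y) Z = 0) ↔
      (∀ X Y Z : V,
        g (covD (⇑J) (fun a b => Dg a b) X Y) Z =
          g (covD (⇑J) (fun a b => Dg a b) Y Z) X
            + g (covD (⇑J) (fun a b => Dg a b) Z X) Y)) ∧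
    ((∀ X Y Z : V, g (covD (⇑J) (fun a b => Dg a b) X Y) Z = 0) ↔
      (∀ X Y : V, g (covD (⇑J) (fun a b => Dg a b) X Y) Y = 0)) := by
  -- halving lemma in `C`
  have h2 : ∀ c : C, c + c = 0 → c = 0 := by
    intro c hc
    have h1 : c = (1/2 : ℝ) • ((2:ℝ) • c) := by rw [smul_smul]; norm_num
    rw [h1, two_smul, hc, smul_zero]
  have hee : ε * ε = 1 := by rcases hε with h | h <;> rw [h] <;> norm_num
  have hea : ε * α = 1 := by rw [mul_comm]; exact hae
  -- `J` is `g`-self-adjoint since `αε = 1`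
  have hsa : ∀ X Y : V, g (J X) Y = g X (J Y) := by
    intro X Y
    have h1 := hherm (J X) Y
    rw [hJ X, map_smul, LinearMap.smul_apply] at h1
    calc g (J X) Y = (ε * ε) • g (J X) Y := by rw [hee, one_smul]
      _ = ε • (ε • g (J X) Y) := mul_smul _ _ _
      _ = ε • (α • g X (J Y)) := by rw [← h1]
      _ = (ε * α) • g X (J Y) := (mul_smul _ _ _).symm
      _ = g X (J Y) := by rw [hea, one_smul]
  -- key symmetry: g((∇_X J)Y, Z) = g((∇_X J)Z, Y)
  have hsym : ∀ X Y Z : V,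
      g (covD (⇑J) (fun a b => Dg a b) X Y) Z = g (covD (⇑J) (fun a b => Dg a b) X Z) Y := by
    intro X Y Z
    have hc1 := hcompat X (J Y) Z
    have hc2 := hcompat X Y (J Z)
    rw [hsa Y Z] at hc1
    have key : g (Dg X (J Y)) Z + g (J Y) (Dg X Z)
        = g (Dg X Y) (J Z) + g Y (Dg X (J Z)) := by rw [← hc1, ← hc2]
    simp only [covD, map_sub, LinearMap.sub_apply]
    rw [hsa (Dg X Y) Z, hsa (Dg X Z) Y, hgsymm (Dg X (J Z)) Y, hgsymm (Dg X Z) (J Y)]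
    linear_combination key
  constructor
  · constructor
    · intro h X Y Z
      rw [h, h, h, add_zero]
    · intro h X Y Z
      -- cyclic invariance
      have hcyc : ∀ X Y Z : V,
          g (covD (⇑J) (fun a b => Dg a b) X Y) Z
            = g (covD (⇑J) (fun a b => Dg a b) Y Z) X := by
        intro X Y Z
        have a := h X Y Z
        have b := h Y Z X
        have := h2 (g (covD (⇑J) (fun a b => Dg a b) X Y) Z
            - g (covD (⇑J) (fun a b => Dg a b) Y Z) X) (by linear_combination a - b)
        linear_combination this
      have h0 : ∀ X Y Z : V, g (covD (⇑J) (fun a b => Dg a b) Z X) Y = 0 := by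
        intro X Y Z
        have a := h X Y Z
        have hv := hcyc X Y Z
        linear_combination hv - a
      exact h0 Y Z X
  · constructor
    · intro h X Y
      exact h X Y Y
    · intro h X Y Z
      have p := h X (Y + Z)
      have pY := h X Y
      have pZ := h X Z
      have hs := hsym X Y Z
      simp only [covD, map_add, map_sub, LinearMap.add_apply, LinearMap.sub_apply] at p pY pZ hs ⊢
      apply h2
      linear_combination p - pY - pZ + hs
end

section
/- Let (M,J,g) be a (J²=±1)-metric manifold with αε = −1. The following are equivalent: (i) the second Nijenhuis tensor Ñ⁻(X,Y) = (∇ᵍ_X J)JY − (∇ᵍ_{JX} J)Y − (∇ᵍ_Y J)JX + (∇ᵍ_{JY} J)X vanishes; (ii) (∇ᵍ_X J)Y − α(∇ᵍ_{JX} J)JY = 0 for all X, Y; (iii) (∇ᵍ_X J)JY − (∇ᵍ_{JX} J)Y = 0 for all X, Y (quasi-Kähler type); (iv) (∇ᵍ_X J)X − α(∇ᵍ_{JX} J)JX = 0 for all X. -/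
lemma aux_half {C : Type*} [CommRing C] [Algebra ℝ C] (c : C) (h : c + c = 0) : c = 0 := by
  have h1 : ((1:ℝ)/2) • (c + c) = 0 := by rw [h, smul_zero]
  have h2 : ((1:ℝ)/2) • (c + c) = c := by rw [smul_add, ← add_smul]; norm_num
  rw [← h2, h1]

lemma aux_key
    {V : Type*} [AddCommGroup V] [Module ℝ V]
    {C : Type*} [CommRing C] [Algebra ℝ C]
    (α : ℝ) (hα : α = 1 ∨ α = -1)
    (J : V →ₗ[ℝ] V) (hJ : ∀ X, J (J X) = α • X)
    (g : V →ₗ[ℝ] V →ₗ[ℝ] C)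
    (hgnondeg : ∀ X : V, (∀ Y, g X Y = 0) → X = 0)
    (hskew : ∀ X Y, g (J X) Y = - g X (J Y))
    (Cv : V → V → V)
    (hCadd1 : ∀ X X' Y, Cv (X + X') Y = Cv X Y + Cv X' Y)
    (hCadd2 : ∀ X Y Y', Cv X (Y + Y') = Cv X Y + Cv X Y')
    (hCsmul1 : ∀ (r : ℝ) X Y, Cv (r • X) Y = r • Cv X Y)
    (hCsmul2 : ∀ (r : ℝ) X Y, Cv X (r • Y) = r • Cv X Y)
    (hCJ : ∀ X Y, Cv X (J Y) = - J (Cv X Y))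
    (hFskew : ∀ X Y Z, g (Cv X Y) Z = - g (Cv X Z) Y) :
    ((∀ X Y : V, Cv X (J Y) - Cv (J X) Y - Cv Y (J X) + Cv (J Y) X = 0) ↔
      (∀ X Y : V, Cv X Y - α • Cv (J X) (J Y) = 0)) ∧
    ((∀ X Y : V, Cv X (J Y) - Cv (J X) Y - Cv Y (J X) + Cv (J Y) X = 0) ↔
      (∀ X Y : V, Cv X (J Y) - Cv (J X) Y = 0)) ∧
    ((∀ X Y : V, Cv X (J Y) - Cv (J X) Y - Cv Y (J X) + Cv (J Y) X = 0) ↔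
      (∀ X : V, Cv X X - α • Cv (J X) (J X) = 0)) := by
  have hα2 : α * α = 1 := by rcases hα with rfl | rfl <;> norm_num
  have hFJ : ∀ X Y Z, g (Cv X (J Y)) Z = g (Cv X Y) (J Z) := by
    intro X Y Z
    rw [hCJ]
    simp [hskew]
  -- II ↔ III (purely algebraic)
  have II_of_III : (∀ X Y : V, Cv X (J Y) - Cv (J X) Y = 0) →
      ∀ X Y : V, Cv X Y - α • Cv (J X) (J Y) = 0 := by
    intro h X Y
    have h1 : Cv (J X) Y = - J (Cv X Y) := by
      have := h X Y
      rw [sub_eq_zero] at this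
      rw [← this, hCJ]
    have h2 : Cv (J X) (J Y) = α • Cv X Y := by
      rw [hCJ, h1, map_neg, neg_neg, hJ]
    rw [h2, smul_smul, hα2, one_smul, sub_self]
  have III_of_II : (∀ X Y : V, Cv X Y - α • Cv (J X) (J Y) = 0) →
      ∀ X Y : V, Cv X (J Y) - Cv (J X) Y = 0 := by
    intro h X Y
    have h1 : Cv X Y = α • Cv (J X) (J Y) := by
      have := h X Y; rwa [sub_eq_zero] at this
    have h2 : J (Cv X Y) = - Cv (J X) Y := by
      rw [h1, hCJ, map_smul, map_neg, hJ, smul_neg, smul_smul, hα2, one_smul]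
    rw [hCJ, h2, neg_neg, sub_self]
  -- III → I (trivial)
  have I_of_III : (∀ X Y : V, Cv X (J Y) - Cv (J X) Y = 0) →
      ∀ X Y : V, Cv X (J Y) - Cv (J X) Y - Cv Y (J X) + Cv (J Y) X = 0 := by
    intro h X Y
    have e1 := h X Y
    have e2 := h Y X
    rw [sub_eq_zero] at e1 e2
    rw [e1, e2]
    abel
  -- I → III (metric braid argument)
  have III_of_I : (∀ X Y : V, Cv X (J Y) - Cv (J X) Y - Cv Y (J X) + Cv (J Y) X = 0) →
      ∀ X Y : V, Cv X (J Y) - Cv (J X) Y = 0 := by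
    intro hI X Y
    have hQ : ∀ A B : V, Cv A (J B) - Cv (J A) B = Cv B (J A) - Cv (J B) A := by
      intro A B
      have h := hI A B
      have : (Cv A (J B) - Cv (J A) B) - (Cv B (J A) - Cv (J B) A) = 0 := by
        rw [← h]; abel
      exact sub_eq_zero.mp this
    have hTsym : ∀ A B Z : V, g (Cv A (J B)) Z - g (Cv (J A) B) Z
        = g (Cv B (J A)) Z - g (Cv (J B) A) Z := by
      intro A B Z
      have := congrArg (fun v => g v Z) (hQ A B)
      simpa [map_sub] using this
    have hTanti : ∀ A B Z : V, g (Cv A (J B)) Z - g (Cv (J A) B) Z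
        = -(g (Cv A (J Z)) B - g (Cv (J A) Z) B) := by
      intro A B Z
      rw [hFskew A (J B) Z, hFskew (J A) B Z, hFJ A Z B]
      ring
    apply hgnondeg
    intro Z
    have c1 : g (Cv X (J Y)) Z - g (Cv (J X) Y) Z
        = -(g (Cv X (J Y)) Z - g (Cv (J X) Y) Z) := by
      calc g (Cv X (J Y)) Z - g (Cv (J X) Y) Z
          = g (Cv Y (J X)) Z - g (Cv (J Y) X) Z := hTsym X Y Z
        _ = -(g (Cv Y (J Z)) X - g (Cv (J Y) Z) X) := hTanti Y X Z
        _ = -(g (Cv Z (J Y)) X - g (Cv (J Z) Y) X) := by rw [hTsym Y Z X]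
        _ = g (Cv Z (J X)) Y - g (Cv (J Z) X) Y := by rw [hTanti Z Y X]; ring
        _ = g (Cv X (J Z)) Y - g (Cv (J X) Z) Y := hTsym Z X Y
        _ = -(g (Cv X (J Y)) Z - g (Cv (J X) Y) Z) := hTanti X Z Y
    have key : g (Cv X (J Y)) Z - g (Cv (J X) Y) Z = 0 :=
      aux_half (g (Cv X (J Y)) Z - g (Cv (J X) Y) Z) (by linear_combination c1)
    simpa [map_sub] using key
  -- II → IV (trivial)
  have IV_of_II : (∀ X Y : V, Cv X Y - α • Cv (J X) (J Y) = 0) →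
      ∀ X : V, Cv X X - α • Cv (J X) (J X) = 0 := fun h X => h X X
  -- IV → II (polarization + metric braid)
  have II_of_IV : (∀ X : V, Cv X X - α • Cv (J X) (J X) = 0) →
      ∀ X Y : V, Cv X Y - α • Cv (J X) (J Y) = 0 := by
    intro hIV X Y
    have hg4 : ∀ W Z : V, g (Cv W W) Z - α • g (Cv (J W) (J W)) Z = 0 := by
      intro W Z
      have := congrArg (fun v => g v Z) (hIV W)
      simpa [map_sub, map_smul] using this
    have hGanti12 : ∀ A B Z : V, g (Cv B A) Z - α • g (Cv (J B) (J A)) Z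
        = -(g (Cv A B) Z - α • g (Cv (J A) (J B)) Z) := by
      intro A B Z
      have e1 := hg4 (A + B) Z
      simp only [map_add, hCadd1, hCadd2, LinearMap.add_apply, smul_add] at e1
      have e2 := hg4 A Z
      have e3 := hg4 B Z
      simp only [Algebra.smul_def] at e1 e2 e3 ⊢
      linear_combination e1 - e2 - e3
    have hGanti23 : ∀ A B Z : V, g (Cv A Z) B - α • g (Cv (J A) (J Z)) B
        = -(g (Cv A B) Z - α • g (Cv (J A) (J B)) Z) := by
      intro A B Z
      have k1 : g (Cv A Z) B = - g (Cv A B) Z := hFskew A Z B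
      have k2 : g (Cv (J A) (J Z)) B = - g (Cv (J A) (J B)) Z := by
        rw [hFJ (J A) Z B, hFskew (J A) Z (J B)]
      rw [k1, k2]
      simp only [Algebra.smul_def]
      ring
    have cyc : ∀ A B Z : V, g (Cv A B) Z - α • g (Cv (J A) (J B)) Z
        = g (Cv B Z) A - α • g (Cv (J B) (J Z)) A := by
      intro A B Z
      have u1 := hGanti12 A B Z
      have u2 := hGanti23 B Z A
      simp only [Algebra.smul_def] at u1 u2 ⊢
      linear_combination u1 - u2
    have hA : ∀ A B Z : V, g (Cv A (J B)) (J Z) - α • g (Cv (J A) (J (J B))) (J Z)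
        = α • (g (Cv A B) Z - α • g (Cv (J A) (J B)) Z) := by
      intro A B Z
      have t1 : g (Cv A (J B)) (J Z) = α • g (Cv A B) Z := by
        rw [hFJ, hJ, map_smul]
      have t2 : g (Cv (J A) (J (J B))) (J Z) = α • g (Cv (J A) (J B)) Z := by
        rw [hFJ, hJ, map_smul]
      rw [t1, t2, smul_sub]
    have hB : ∀ A B Z : V, g (Cv (J A) (J B)) Z - α • g (Cv (J (J A)) (J (J B))) Z
        = -(α • (g (Cv A B) Z - α • g (Cv (J A) (J B)) Z)) := by
      intro A B Z
      have u : Cv (J (J A)) (J (J B)) = Cv A B := by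
        rw [hJ, hJ, hCsmul1, hCsmul2, smul_smul, hα2, one_smul]
      rw [u, smul_sub, smul_smul, hα2, one_smul]
      abel
    apply hgnondeg
    intro Z
    have e : α • (g (Cv X Y) Z - α • g (Cv (J X) (J Y)) Z)
        = -(α • (g (Cv X Y) Z - α • g (Cv (J X) (J Y)) Z)) := by
      calc α • (g (Cv X Y) Z - α • g (Cv (J X) (J Y)) Z)
          = g (Cv X (J Y)) (J Z) - α • g (Cv (J X) (J (J Y))) (J Z) := (hA X Y Z).symm
        _ = g (Cv (J Y) (J Z)) X - α • g (Cv (J (J Y)) (J (J Z))) X := cyc X (J Y) (J Z)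
        _ = -(α • (g (Cv Y Z) X - α • g (Cv (J Y) (J Z)) X)) := hB Y Z X
        _ = -(α • (g (Cv Z X) Y - α • g (Cv (J Z) (J X)) Y)) := by rw [cyc Y Z X]
        _ = -(α • (g (Cv X Y) Z - α • g (Cv (J X) (J Y)) Z)) := by rw [cyc Z X Y]
    have e0 : α • (g (Cv X Y) Z - α • g (Cv (J X) (J Y)) Z) = 0 :=
      aux_half (α • (g (Cv X Y) Z - α • g (Cv (J X) (J Y)) Z)) (by linear_combination e)
    have efin : g (Cv X Y) Z - α • g (Cv (J X) (J Y)) Z = 0 := by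
      have : g (Cv X Y) Z - α • g (Cv (J X) (J Y)) Z
          = α • (α • (g (Cv X Y) Z - α • g (Cv (J X) (J Y)) Z)) := by
        rw [smul_smul, hα2, one_smul]
      rw [this, e0, smul_zero]
    simpa [map_sub, map_smul] using efin
  exact ⟨⟨fun h => II_of_III (III_of_I h), fun h => I_of_III (III_of_II h)⟩,
    ⟨III_of_I, I_of_III⟩,
    ⟨fun h => IV_of_II (II_of_III (III_of_I h)), fun h => I_of_III (III_of_II (II_of_IV h))⟩⟩


/-- for `αε = −1`, equivalence of the vanishing of the second Nijenhuis tensor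
with the quasi-Kähler conditions. -/
theorem quasi_kaehler_characterizations_ae_neg
    {V : Type*} [AddCommGroup V] [Module ℝ V]
    {C : Type*} [CommRing C] [Algebra ℝ C]
    (α ε : ℝ) (hα : α = 1 ∨ α = -1) (hε : ε = 1 ∨ ε = -1)
    (J : V →ₗ[ℝ] V) (hJ : ∀ X, J (J X) = α • X)
    (g : V →ₗ[ℝ] V →ₗ[ℝ] C)
    (hgsymm : ∀ X Y, g X Y = g Y X)
    (hgnondeg : ∀ X : V, (∀ Y, g X Y = 0) → X = 0)
    (hherm : ∀ X Y, g (J X) (J Y) = ε • g X Y)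
    (lb : V →ₗ[ℝ] V →ₗ[ℝ] V)
    (act : V → C → C)
    (Dg : V →ₗ[ℝ] V →ₗ[ℝ] V)
    (htf : ∀ X Y : V, Dg X Y - Dg Y X = lb X Y)
    (hcompat : ∀ X Y Z : V, act X (g Y Z) = g (Dg X Y) Z + g Y (Dg X Z))
    (hae : α * ε = -1) :
    ((∀ X Y : V,
        covD (⇑J) (fun a b => Dg a b) X (J Y) - covD (⇑J) (fun a b => Dg a b) (J X) Y
          - covD (⇑J) (fun a b => Dg a b) Y (J X) + covD (⇑J) (fun a b => Dg a b) (J Y) X = 0) ↔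
      (∀ X Y : V,
        covD (⇑J) (fun a b => Dg a b) X Y
          - α • covD (⇑J) (fun a b => Dg a b) (J X) (J Y) = 0)) ∧
    ((∀ X Y : V,
        covD (⇑J) (fun a b => Dg a b) X (J Y) - covD (⇑J) (fun a b => Dg a b) (J X) Y
          - covD (⇑J) (fun a b => Dg a b) Y (J X) + covD (⇑J) (fun a b => Dg a b) (J Y) X = 0) ↔
      (∀ X Y : V,
        covD (⇑J) (fun a b => Dg a b) X (J Y) - covD (⇑J) (fun a b => Dg a b) (J X) Y = 0)) ∧
    ((∀ X Y : V,
        covD (⇑J) (fun a b => Dg a b) X (J Y) - covD (⇑J) (fun a b => Dg a b) (J X) Y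
          - covD (⇑J) (fun a b => Dg a b) Y (J X) + covD (⇑J) (fun a b => Dg a b) (J Y) X = 0) ↔
      (∀ X : V,
        covD (⇑J) (fun a b => Dg a b) X X
          - α • covD (⇑J) (fun a b => Dg a b) (J X) (J X) = 0)) := by
  have hα2 : α * α = 1 := by rcases hα with rfl | rfl <;> norm_num
  have hskew : ∀ X Y, g (J X) Y = - g X (J Y) := by
    intro X Y
    have h := hherm X (J Y)
    rw [hJ Y, map_smul] at h
    have h2 := congrArg (fun c => α • c) h
    rw [smul_smul, smul_smul, hα2, hae, one_smul, neg_one_smul] at h2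
    exact h2
  have hCadd1 : ∀ X X' Y : V, covD (⇑J) (fun a b => Dg a b) (X + X') Y
      = covD (⇑J) (fun a b => Dg a b) X Y + covD (⇑J) (fun a b => Dg a b) X' Y := by
    intro X X' Y
    simp only [covD, map_add, LinearMap.add_apply]
    abel
  have hCadd2 : ∀ X Y Y' : V, covD (⇑J) (fun a b => Dg a b) X (Y + Y')
      = covD (⇑J) (fun a b => Dg a b) X Y + covD (⇑J) (fun a b => Dg a b) X Y' := by
    intro X Y Y'
    simp only [covD, map_add, LinearMap.add_apply]
    abel
  have hCsmul1 : ∀ (r : ℝ) (X Y : V), covD (⇑J) (fun a b => Dg a b) (r • X) Y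
      = r • covD (⇑J) (fun a b => Dg a b) X Y := by
    intro r X Y
    simp only [covD, map_smul, LinearMap.smul_apply, smul_sub]
  have hCsmul2 : ∀ (r : ℝ) (X Y : V), covD (⇑J) (fun a b => Dg a b) X (r • Y)
      = r • covD (⇑J) (fun a b => Dg a b) X Y := by
    intro r X Y
    simp only [covD, map_smul, LinearMap.smul_apply, smul_sub]
  have hCJ : ∀ X Y : V, covD (⇑J) (fun a b => Dg a b) X (J Y)
      = - J (covD (⇑J) (fun a b => Dg a b) X Y) := by
    intro X Y
    simp only [covD, hJ, map_sub, map_smul]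
    abel
  have hFskew : ∀ X Y Z : V, g (covD (⇑J) (fun a b => Dg a b) X Y) Z
      = - g (covD (⇑J) (fun a b => Dg a b) X Z) Y := by
    intro X Y Z
    simp only [covD]
    have harg : g (J Y) Z = g (-Y) (J Z) := by
      simp [hskew]
    have e1 := hcompat X (J Y) Z
    have e2 := hcompat X (-Y) (J Z)
    rw [harg] at e1
    have key : g (Dg X (J Y)) Z + g (J Y) (Dg X Z)
        = g (Dg X (-Y)) (J Z) + g (-Y) (Dg X (J Z)) := by rw [← e1, e2]
    simp only [map_neg, map_sub, LinearMap.neg_apply, LinearMap.sub_apply] at key ⊢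
    rw [hskew (Dg X Y) Z, hskew (Dg X Z) Y]
    have s1 := hgsymm (J Y) (Dg X Z)
    have s2 := hgsymm Y (Dg X (J Z))
    linear_combination key - s1 - s2
  exact aux_key α hα J hJ g hgnondeg hskew (covD (⇑J) (fun a b => Dg a b))
    hCadd1 hCadd2 hCsmul1 hCsmul2 hCJ hFskew
end

section
/- Let (M,J,g) be a (J²=±1)-metric manifold and T⁰ the torsion of the first canonical connection ∇⁰_X Y = ∇ᵍ_X Y + (−α/2)(∇ᵍ_X J)JY. Then for all X, Y: T⁰(JX,JY) + α T⁰(X,Y) = −½ N_J(X,Y), and T⁰(JX,JY) − α T⁰(X,Y) = ½((∇ᵍ_X J)JY − (∇ᵍ_{JX} J)Y − (∇ᵍ_Y J)JX + (∇ᵍ_{JY} J)X). -/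
/-- identities for the torsion `T⁰` of the first canonical connection:
`T⁰(JX,JY) + α T⁰(X,Y) = −½ N_J(X,Y)` and
`T⁰(JX,JY) − α T⁰(X,Y) = ½((∇ᵍ_X J)JY − (∇ᵍ_{JX} J)Y − (∇ᵍ_Y J)JX + (∇ᵍ_{JY} J)X)`. -/
theorem torsion0_identities
    {V : Type*} [AddCommGroup V] [Module ℝ V]
    {C : Type*} [CommRing C] [Algebra ℝ C]
    (α ε : ℝ) (hα : α = 1 ∨ α = -1) (hε : ε = 1 ∨ ε = -1)
    (J : V →ₗ[ℝ] V) (hJ : ∀ X, J (J X) = α • X)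
    (g : V →ₗ[ℝ] V →ₗ[ℝ] C)
    (hgsymm : ∀ X Y, g X Y = g Y X)
    (hgnondeg : ∀ X : V, (∀ Y, g X Y = 0) → X = 0)
    (hherm : ∀ X Y, g (J X) (J Y) = ε • g X Y)
    (lb : V →ₗ[ℝ] V →ₗ[ℝ] V)
    (act : V → C → C)
    (Dg : V →ₗ[ℝ] V →ₗ[ℝ] V)
    (htf : ∀ X Y : V, Dg X Y - Dg Y X = lb X Y)
    (hcompat : ∀ X Y Z : V, act X (g Y Z) = g (Dg X Y) Z + g Y (Dg X Z)) :
    (∀ X Y : V,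
      torsion (fun a b => lb a b) (conn0 α (⇑J) (fun a b => Dg a b)) (J X) (J Y)
          + α • torsion (fun a b => lb a b) (conn0 α (⇑J) (fun a b => Dg a b)) X Y =
        (-(2⁻¹ : ℝ)) • nijenhuis (⇑J) (fun a b => lb a b) X Y) ∧
    (∀ X Y : V,
      torsion (fun a b => lb a b) (conn0 α (⇑J) (fun a b => Dg a b)) (J X) (J Y)
          - α • torsion (fun a b => lb a b) (conn0 α (⇑J) (fun a b => Dg a b)) X Y =
        (2⁻¹ : ℝ) •
          (covD (⇑J) (fun a b => Dg a b) X (J Y) - covD (⇑J) (fun a b => Dg a b) (J X) Y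
            - covD (⇑J) (fun a b => Dg a b) Y (J X)
            + covD (⇑J) (fun a b => Dg a b) (J Y) X)) := by
  have hlb : ∀ X Y : V, lb X Y = Dg X Y - Dg Y X := fun X Y => (htf X Y).symm
  rcases hα with h | h <;> subst h <;> constructor <;> intro X Y <;>
  · simp only [torsion, conn0, covD, nijenhuis, hlb, hJ, map_add, map_sub, map_smul,
      smul_add, smul_sub, smul_smul]
    module
end

section
/- Let (M,J,g) be a (J²=±1)-metric manifold with Levi-Civita connection ∇ᵍ. If there exists a connection ∇ with ∇J = 0, ∇g = 0 whose torsion T is totally skew-symmetric (i.e. (X,Y,Z) ↦ g(T(X,Y),Z) is a 3-form), then (∇ᵍ_X J)JY + (∇ᵍ_{JX} J)Y + (∇ᵍ_Y J)JX + (∇ᵍ_{JY} J)X = 0 for all vector fields X, Y, and the Nijenhuis tensor satisfies N_J(X,Y) = 2((∇ᵍ_X J)JY + (∇ᵍ_{JX} J)Y). -/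
/-- if there exists an adapted connection with totally skew-symmetric torsion,
then `(∇ᵍ_X J)JY + (∇ᵍ_{JX} J)Y + (∇ᵍ_Y J)JX + (∇ᵍ_{JY} J)X = 0` and
`N_J(X,Y) = 2((∇ᵍ_X J)JY + (∇ᵍ_{JX} J)Y)`. -/
theorem skew_torsion_implies_conditions
    {V : Type*} [AddCommGroup V] [Module ℝ V]
    {C : Type*} [CommRing C] [Algebra ℝ C]
    (α ε : ℝ) (hα : α = 1 ∨ α = -1) (hε : ε = 1 ∨ ε = -1)
    (J : V →ₗ[ℝ] V) (hJ : ∀ X, J (J X) = α • X)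
    (g : V →ₗ[ℝ] V →ₗ[ℝ] C)
    (hgsymm : ∀ X Y, g X Y = g Y X)
    (hgnondeg : ∀ X : V, (∀ Y, g X Y = 0) → X = 0)
    (hherm : ∀ X Y, g (J X) (J Y) = ε • g X Y)
    (lb : V →ₗ[ℝ] V →ₗ[ℝ] V)
    (act : V → C → C)
    (Dg : V →ₗ[ℝ] V →ₗ[ℝ] V)
    (htf : ∀ X Y : V, Dg X Y - Dg Y X = lb X Y)
    (hcompat : ∀ X Y Z : V, act X (g Y Z) = g (Dg X Y) Z + g Y (Dg X Z))
    (Da : V →ₗ[ℝ] V →ₗ[ℝ] V)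
    (haJ : ∀ X Y : V, Da X (J Y) = J (Da X Y))
    (hag : ∀ X Y Z : V, act X (g Y Z) = g (Da X Y) Z + g Y (Da X Z))
    (hskew1 : ∀ X Y Z : V,
      g (torsion (fun a b => lb a b) (fun a b => Da a b) X Y) Z =
        - g (torsion (fun a b => lb a b) (fun a b => Da a b) Y X) Z)
    (hskew2 : ∀ X Y Z : V,
      g (torsion (fun a b => lb a b) (fun a b => Da a b) X Y) Z =
        - g (torsion (fun a b => lb a b) (fun a b => Da a b) X Z) Y) :
    (∀ X Y : V,
      covD (⇑J) (fun a b => Dg a b) X (J Y) + covD (⇑J) (fun a b => Dg a b) (J X) Y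
        + covD (⇑J) (fun a b => Dg a b) Y (J X) + covD (⇑J) (fun a b => Dg a b) (J Y) X = 0) ∧
    (∀ X Y : V,
      nijenhuis (⇑J) (fun a b => lb a b) X Y =
        (2 : ℝ) •
          (covD (⇑J) (fun a b => Dg a b) X (J Y) + covD (⇑J) (fun a b => Dg a b) (J X) Y)) := by
    -- `A X Y = Da X Y - Dg X Y` is the difference tensor.
  -- Metric compatibility of both connections: g (A X Y) Z = - g (A X Z) Y.
  have hm : ∀ X Y Z : V, g (Da X Y - Dg X Y) Z = - g (Da X Z - Dg X Z) Y := by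
    intro X Y Z
    simp only [map_sub, LinearMap.sub_apply]
    linear_combination (hcompat X Y Z) - (hag X Y Z) - (hgsymm Y (Da X Z))
      + (hgsymm Y (Dg X Z))
  -- torsion of Da in terms of A
  have htor : ∀ X Y : V, torsion (fun a b => lb a b) (fun a b => Da a b) X Y =
      (Da X Y - Dg X Y) - (Da Y X - Dg Y X) := by
    intro X Y
    simp only [torsion]
    rw [← htf X Y]
    abel
  -- skewness of torsion in outer slots
  have hstar : ∀ X Y Z : V, g (Da Y X - Dg Y X) Z = - g (Da Z X - Dg Z X) Y := by
    intro X Y Z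
    have h := hskew2 X Y Z
    rw [htor, htor] at h
    simp only [map_sub, LinearMap.sub_apply] at h ⊢
    have hm1 := hm X Y Z
    simp only [map_sub, LinearMap.sub_apply] at hm1
    linear_combination hm1 - h
  -- g (A X Y) Z is skew in the first two slots
  have hss : ∀ X Y Z : V, g (Da X Y - Dg X Y) Z = - g (Da Y X - Dg Y X) Z := by
    intro X Y Z
    have h1 := hstar Y X Z
    have h2 := hm Z Y X
    have h3 := hstar X Z Y
    simp only [map_sub, LinearMap.sub_apply] at h1 h2 h3 ⊢
    linear_combination h1 - h2 + h3
  -- hence A itself is skew-symmetric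
  have hskewA : ∀ X Y : V, Da X Y - Dg X Y = -(Da Y X - Dg Y X) := by
    intro X Y
    have h0 : ∀ Z : V, g ((Da X Y - Dg X Y) + (Da Y X - Dg Y X)) Z = 0 := by
      intro Z
      have := hss X Y Z
      simp only [map_add, map_sub, LinearMap.add_apply, LinearMap.sub_apply] at this ⊢
      linear_combination this
    have := hgnondeg _ h0
    exact eq_neg_of_add_eq_zero_left this
  -- covariant derivative of J w.r.t. Dg, in terms of A
  have hcov : ∀ X Y : V, covD (⇑J) (fun a b => Dg a b) X Y =
      J (Da X Y - Dg X Y) - (Da X (J Y) - Dg X (J Y)) := by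
    intro X Y
    simp only [covD, map_sub]
    rw [← haJ X Y]
    abel
  have goal1 : ∀ X Y : V,
      covD (⇑J) (fun a b => Dg a b) X (J Y) + covD (⇑J) (fun a b => Dg a b) (J X) Y
        + covD (⇑J) (fun a b => Dg a b) Y (J X) + covD (⇑J) (fun a b => Dg a b) (J Y) X = 0 := by
    intro X Y
    rw [hcov X (J Y), hcov (J X) Y, hcov Y (J X), hcov (J Y) X]
    simp only [hJ, map_smul]
    have e1 : J (Da Y (J X) - Dg Y (J X)) = - J (Da (J X) Y - Dg (J X) Y) := by
      rw [hskewA Y (J X), map_neg]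
    have e2 : J (Da (J Y) X - Dg (J Y) X) = - J (Da X (J Y) - Dg X (J Y)) := by
      rw [hskewA (J Y) X, map_neg]
    have e3 := hskewA (J Y) (J X)
    have e4 := hskewA Y X
    linear_combination (norm := module) e1 + e2 - e3 - α • e4
  refine ⟨goal1, ?_⟩
  intro X Y
  have key := goal1 X Y
  simp only [covD, nijenhuis, ← htf, map_sub, hJ, map_smul] at key ⊢
  linear_combination (norm := module) -key
end
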